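/- A point (a,b) ∈ ℝⁿ×ℝⁿ satisfies ∇F(a,b) = 0 if and only if for each i ∈ {1,…,n} at least one of the following holds, where s = a² − b²: (i) aᵢ = bᵢ = 0; (ii) aᵢ = 0 and ∇h(s)ᵢ = μ; (iii) bᵢ = 0 and ∇h(s)ᵢ = −μ. -/

import Mathlib

/-!
By the chain rule, `∇F(a, b) = (2a ⊙ (∇h(s) + μ), 2b ⊙ (μ − ∇h(s)))` with `s = a² − b²`.
This vanishes iff for every `i` both `aᵢ = 0 ∨ ∇h(s)ᵢ = −μ` and `bᵢ = 0 ∨ ∇h(s)ᵢ = μ` hold;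
since `μ ≠ 0` the alternatives `∇h(s)ᵢ = −μ` and `∇h(s)ᵢ = μ` exclude each other, which
leaves exactly the three cases.
-/

open WithLp Matrix

theorem ContinuousLinearMap.coprod_eq_zero_iff {R M M₁ M₂ : Type*} [Semiring R]
    [TopologicalSpace M] [TopologicalSpace M₁] [TopologicalSpace M₂]
    [AddCommMonoid M] [Module R M] [ContinuousAdd M] [AddCommMonoid M₁] [Module R M₁]
    [AddCommMonoid M₂] [Module R M₂] {f₁ : M₁ →L[R] M} {f₂ : M₂ →L[R] M} :
    f₁.coprod f₂ = 0 ↔ f₁ = 0 ∧ f₂ = 0 := by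
  refine ⟨fun h => ⟨?_, ?_⟩, fun ⟨h₁, h₂⟩ => ?_⟩
  · simpa using congr($h ∘L .inl R M₁ M₂)
  · simpa using congr($h ∘L .inr R M₁ M₂)
  · ext <;> simp [h₁, h₂]

theorem innerSL_eq_zero_iff {𝕜 E : Type*} [RCLike 𝕜] [NormedAddCommGroup E]
    [InnerProductSpace 𝕜 E] {x : E} : innerSL 𝕜 x = 0 ↔ x = 0 := by
  simpa using innerSL_inj (𝕜 := 𝕜) (x := x) (y := 0)

section HadamardDifference

variable {ι : Type*} [Fintype ι]

def hdpObjective (h : EuclideanSpace ℝ ι → ℝ) (μ : ℝ)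
    (p : EuclideanSpace ℝ ι × EuclideanSpace ℝ ι) : ℝ :=
  h (toLp 2 fun i => p.1 i ^ 2 - p.2 i ^ 2) + μ * ∑ i, (p.1 i ^ 2 + p.2 i ^ 2)

theorem hasFDerivAt_sq_sub_sq [DecidableEq ι] (a b : EuclideanSpace ℝ ι) :
    HasFDerivAt (fun p : EuclideanSpace ℝ ι × EuclideanSpace ℝ ι =>
        toLp 2 fun i => p.1 i ^ 2 - p.2 i ^ 2)
      (2 • (toEuclideanCLM (𝕜 := ℝ) (diagonal (ofLp a)) ∘L .fst ℝ _ _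
        - toEuclideanCLM (𝕜 := ℝ) (diagonal (ofLp b)) ∘L .snd ℝ _ _)) (a, b) := by
  rw [← hasFDerivWithinAt_univ, hasFDerivWithinAt_piLp]
  intro i
  rw [hasFDerivWithinAt_univ]
  have ha := (PiLp.hasFDerivAt_apply 2 a i).comp (a, b) (hasFDerivAt_fst (𝕜 := ℝ))
  have hb := (PiLp.hasFDerivAt_apply 2 b i).comp (a, b) (hasFDerivAt_snd (𝕜 := ℝ))
  convert (ha.pow 2).sub (hb.pow 2) using 1
  · rfl
  · refine ContinuousLinearMap.ext fun p => ?_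
    simp only [ContinuousLinearMap.comp_smul, ContinuousLinearMap.comp_sub,
      _root_.smul_apply, _root_.sub_apply,
      ContinuousLinearMap.comp_apply, ContinuousLinearMap.coe_fst', ContinuousLinearMap.coe_snd',
      PiLp.proj_apply, ofLp_toEuclideanCLM, mulVec_diagonal, nsmul_eq_mul, Nat.cast_ofNat,
      Function.comp_apply, Nat.add_one_sub_one, pow_one, smul_eq_mul]
    ring

theorem hasFDerivAt_sum_sq_add_sq (a b : EuclideanSpace ℝ ι) :
    HasFDerivAt (fun p : EuclideanSpace ℝ ι × EuclideanSpace ℝ ι => ∑ i, (p.1 i ^ 2 + p.2 i ^ 2))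
      (2 • (innerSL ℝ a ∘L .fst ℝ _ _ + innerSL ℝ b ∘L .snd ℝ _ _)) (a, b) := by
  have hnorm : (fun p : EuclideanSpace ℝ ι × EuclideanSpace ℝ ι => ∑ i, (p.1 i ^ 2 + p.2 i ^ 2))
      = fun p => ‖p.1‖ ^ 2 + ‖p.2‖ ^ 2 := by
    funext p
    simp only [Finset.sum_add_distrib, EuclideanSpace.norm_sq_eq, Real.norm_eq_abs, sq_abs]
  rw [hnorm, smul_add]
  exact (hasFDerivAt_fst (𝕜 := ℝ) (p := (a, b))).norm_sq.add
    (hasFDerivAt_snd (𝕜 := ℝ) (p := (a, b))).norm_sq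

theorem hasFDerivAt_hdpObjective [DecidableEq ι] {h : EuclideanSpace ℝ ι → ℝ}
    {g : EuclideanSpace ℝ ι} (μ : ℝ) {a b : EuclideanSpace ℝ ι}
    (hg : HasGradientAt h g (toLp 2 fun i => a i ^ 2 - b i ^ 2)) :
    HasFDerivAt (hdpObjective h μ)
      ((innerSL ℝ (toLp 2 fun i => 2 * a i * (g i + μ))).coprod
        (innerSL ℝ (toLp 2 fun i => 2 * b i * (μ - g i)))) (a, b) := by
  have hF : HasFDerivAt (hdpObjective h μ) _ (a, b) :=
    (hg.hasFDerivAt.comp (a, b) (hasFDerivAt_sq_sub_sq a b)).add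
      ((hasFDerivAt_sum_sq_add_sq a b).const_mul μ)
  refine hF.congr_fderiv (ContinuousLinearMap.ext fun p => ?_)
  simp only [_root_.add_apply, _root_.smul_apply,
    ContinuousLinearMap.comp_apply, ContinuousLinearMap.comp_smul, ContinuousLinearMap.comp_sub,
    _root_.sub_apply, ContinuousLinearMap.coe_fst', ContinuousLinearMap.coe_snd',
    ContinuousLinearMap.coprod_apply, InnerProductSpace.toDual_apply_apply, PiLp.inner_apply,
    ofLp_toEuclideanCLM, mulVec_diagonal, RCLike.inner_apply, Real.ringHom_apply,
    coe_innerSL_apply, nsmul_eq_mul, Nat.cast_ofNat, smul_add, smul_eq_mul, Finset.mul_sum,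
    ← Finset.sum_add_distrib]
  rw [← Finset.sum_sub_distrib, Finset.mul_sum, ← Finset.sum_add_distrib]
  exact Finset.sum_congr rfl fun i _ => by ring

end HadamardDifference

theorem hdp_stationary_coord_iff {a b g μ : ℝ} (hμ : μ ≠ 0) :
    (2 * a * (g + μ) = 0 ∧ 2 * b * (μ - g) = 0) ↔
      (a = 0 ∧ b = 0) ∨ (a = 0 ∧ g = μ) ∨ (b = 0 ∧ g = -μ) := by
  constructor
  · rintro ⟨ha, hb⟩
    simp only [mul_eq_zero, two_ne_zero, false_or, add_eq_zero_iff_eq_neg, sub_eq_zero] at ha hb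
    rcases ha with ha | hg <;> rcases hb with hb | hg'
    · exact .inl ⟨ha, hb⟩
    · exact .inr (.inl ⟨ha, hg'.symm⟩)
    · exact .inr (.inr ⟨hb, hg⟩)
    · exact absurd (by linarith : μ = 0) hμ
  · rintro (⟨rfl, rfl⟩ | ⟨rfl, rfl⟩ | ⟨rfl, rfl⟩) <;> simp

theorem stmt4 (n : ℕ)
    (h : EuclideanSpace ℝ (Fin n) → ℝ) (hh : ContDiff ℝ 2 h)
    (μ : ℝ) (hμ : 0 < μ)
    (F : EuclideanSpace ℝ (Fin n) × EuclideanSpace ℝ (Fin n) → ℝ)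
    (hF : F = fun p =>
      h (WithLp.toLp 2 (fun i => p.1 i ^ 2 - p.2 i ^ 2)) + μ * ∑ i, (p.1 i ^ 2 + p.2 i ^ 2))
    (a b : EuclideanSpace ℝ (Fin n))
    (s : EuclideanSpace ℝ (Fin n)) (hs : s = WithLp.toLp 2 (fun i => a i ^ 2 - b i ^ 2)) :
    fderiv ℝ F (a, b) = 0 ↔
      ∀ i : Fin n,
        (a i = 0 ∧ b i = 0) ∨
        (a i = 0 ∧ gradient h s i = μ) ∨
        (b i = 0 ∧ gradient h s i = -μ) := by
  have hg := (hh.differentiable two_ne_zero s).hasGradientAt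
  subst hF hs
  change fderiv ℝ (hdpObjective h μ) (a, b) = 0 ↔ _
  rw [(hasFDerivAt_hdpObjective μ hg).fderiv, ContinuousLinearMap.coprod_eq_zero_iff]
  simp only [innerSL_eq_zero_iff, WithLp.toLp_eq_zero, funext_iff, Pi.zero_apply, ← forall_and]
  exact forall_congr' fun i => hdp_stationary_coord_iff hμ.ne'
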